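/- arXiv:1601.03245 — 2 statements merged into one kernel-verified Lean document; each statement's English description precedes it below -/
import Mathlib

section
/- Let k ∈ ℂ, let (S, C, D) be a Jacobi triple with modulus k, let κ, β ∈ ℂ with κ² = k, κ ≠ 0, β² = 1 − k, and let p, q ∈ ℤ. On the open set U = { z ∈ ℂ : C(z/κ) ≠ 0 }, the triple (z ↦ (−1)^p D(z/κ)/C(z/κ), z ↦ (−1)^{p+q} i·β·S(z/κ)/C(z/κ), z ↦ (−1)^{q+1} i·(β/κ)/C(z/κ)) satisfies system (1) with modulus 1/k. (This is the reciprocal-modulus form of sn = (−1)^p dc, cn = (−1)^{p+q} i√(1−k) sc, dn = (−1)^{q+1} i√((1−k)/k) nc.) -/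
/-- A Jacobi triple with modulus `k`: the model is `(sn(·|k), cn(·|k), dn(·|k))`. -/
def IsJacobiTriple (k : ℂ) (S C D : ℂ → ℂ) : Prop :=
  ∀ z : ℂ, HasDerivAt S (C z * D z) z ∧ HasDerivAt C (-(S z * D z)) z ∧
    HasDerivAt D (-(k * S z * C z)) z ∧
    S z ^ 2 + C z ^ 2 = 1 ∧ D z ^ 2 + k * S z ^ 2 = 1

/-- A triple `(St, Ct, Dt)` satisfies system (1) with modulus `m` on `U`:
at every point of `U` the functions are differentiable with `St′ = Ct·Dt`,
and `St² + Ct² = 1` and `Dt² + m·St² = 1` hold on `U`. -/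
def SatisfiesSystem1 (m : ℂ) (St Ct Dt : ℂ → ℂ) (U : Set ℂ) : Prop :=
  ∀ z ∈ U, HasDerivAt St (Ct z * Dt z) z ∧
    DifferentiableAt ℂ Ct z ∧ DifferentiableAt ℂ Dt z ∧
    St z ^ 2 + Ct z ^ 2 = 1 ∧ Dt z ^ 2 + m * St z ^ 2 = 1

/-!
Write `w = z / κ`. On the set where `C w ≠ 0` the Jacobi relations give
`D² - k C² = 1 - k = β²`, hence `(D / C)' = β² S / C²`; with the chain-rule factor `1 / κ` this is
the product `(± i β S / C) (± i β / (κ C))`, because `i² = -1` and the signs multiply to `-(-1)^p`.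
The two quadratic relations of modulus `1 / k` reduce to `S² + C² = 1` and `D² + k S² = 1`
after clearing the denominators `C²` and `κ² = k`.
-/

open Complex

namespace IsJacobiTriple

variable {k : ℂ} {S C D : ℂ → ℂ}

theorem sq_sub_mul_sq (hJ : IsJacobiTriple k S C D) (u : ℂ) :
    D u ^ 2 - k * C u ^ 2 = 1 - k := by
  obtain ⟨-, -, -, hSC, hDS⟩ := hJ u
  linear_combination hDS - k * hSC

theorem hasDerivAt_div (hJ : IsJacobiTriple k S C D) {u : ℂ} (hu : C u ≠ 0) :
    HasDerivAt (fun u => D u / C u) ((1 - k) * S u / C u ^ 2) u := by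
  obtain ⟨-, hC, hD, -, -⟩ := hJ u
  refine (hD.div hC hu).congr_deriv ?_
  rw [← hJ.sq_sub_mul_sq u]
  ring

theorem satisfiesSystem1_inv (hJ : IsJacobiTriple k S C D) {κ β a b c : ℂ}
    (hκ : κ ^ 2 = k) (hκ0 : κ ≠ 0) (hβ : β ^ 2 = 1 - k)
    (ha : a ^ 2 = 1) (hb : b ^ 2 = 1) (hc : c ^ 2 = 1) (hbc : b * c = -a) :
    SatisfiesSystem1 (1 / k)
      (fun z => a * D (z / κ) / C (z / κ))
      (fun z => b * I * β * S (z / κ) / C (z / κ))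
      (fun z => c * I * (β / κ) / C (z / κ))
      {z : ℂ | C (z / κ) ≠ 0} := by
  intro z (hz : C (z / κ) ≠ 0)
  obtain ⟨hS, hC, -, hSC, hDS⟩ := hJ (z / κ)
  have hk0 : k ≠ 0 := hκ ▸ pow_ne_zero 2 hκ0
  have hscale : HasDerivAt (· / κ) (1 / κ) z := by
    simpa using (hasDerivAt_id z).div_const κ
  have hS' := hS.differentiableAt
  have hC' := hC.differentiableAt
  refine ⟨?_, by fun_prop (disch := exact hz), by fun_prop (disch := exact hz), ?_, ?_⟩
  · have hdc := ((hJ.hasDerivAt_div hz).comp z hscale).const_mul a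
    simp only [Function.comp_def, ← mul_div_assoc] at hdc
    refine hdc.congr_deriv ?_
    field_simp
    linear_combination -(I ^ 2 * β ^ 2 * S (z / κ)) * hbc + (a * β ^ 2 * S (z / κ)) * I_sq
      - (a * S (z / κ)) * hβ
  · field_simp
    linear_combination D (z / κ) ^ 2 * ha + (I ^ 2 * β ^ 2 * S (z / κ) ^ 2) * hb
      + (β ^ 2 * S (z / κ) ^ 2) * I_sq - S (z / κ) ^ 2 * hβ - hSC + hDS
  · field_simp
    linear_combination (I ^ 2 * β ^ 2 * k) * hc + (β ^ 2 * k) * I_sq + (κ ^ 2 * D (z / κ) ^ 2) * ha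
      + (D (z / κ) ^ 2 - k * C (z / κ) ^ 2) * hκ - k * hβ - k ^ 2 * hSC + k * hDS

end IsJacobiTriple

theorem neg_one_zpow_sq (n : ℤ) : ((-1 : ℂ) ^ n) ^ 2 = 1 := by
  rw [← zpow_natCast, ← zpow_mul]
  exact Even.neg_one_zpow ⟨n, by push_cast; ring⟩

theorem stmt_3 (k : ℂ) (S C D : ℂ → ℂ) (hJ : IsJacobiTriple k S C D)
    (κ β : ℂ) (hκ : κ ^ 2 = k) (hκ0 : κ ≠ 0) (hβ : β ^ 2 = 1 - k) (p q : ℤ) :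
    SatisfiesSystem1 (1 / k)
      (fun z => (-1 : ℂ) ^ p * D (z / κ) / C (z / κ))
      (fun z => (-1 : ℂ) ^ (p + q) * Complex.I * β * S (z / κ) / C (z / κ))
      (fun z => (-1 : ℂ) ^ (q + 1) * Complex.I * (β / κ) / C (z / κ))
      {z : ℂ | C (z / κ) ≠ 0} := by
  have hsign : (-1 : ℂ) ^ (p + q) * (-1) ^ (q + 1) = -(-1) ^ p := by
    rw [← zpow_add₀ (by norm_num), show p + q + (q + 1) = p + 1 + 2 * q by ring,
      zpow_add₀ (by norm_num), zpow_mul, zpow_add_one₀ (by norm_num)]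
    simp
  exact hJ.satisfiesSystem1_inv hκ hκ0 hβ (neg_one_zpow_sq p) (neg_one_zpow_sq (p + q))
    (neg_one_zpow_sq (q + 1)) hsign
end

section
/- (Landen-type transformation.) Let k ∈ ℂ, let (S, C, D) be a Jacobi triple with modulus k, let ε ∈ {1, −1}, and let β ∈ ℂ with β² = 1 − k and λ := β − ε ≠ 0. Writing w = z/λ, on the open set U = { z ∈ ℂ : D(w) ≠ 0 and (εβ − 1)·S(w)² + 1 ≠ 0 }, the triple (z ↦ λ·S(w)·C(w)/D(w), z ↦ ((εβ − 1)·S(w)² + 1)/D(w), z ↦ (1 − (D(w)² + 1)·S(w)²) / (D(w)·((εβ − 1)·S(w)² + 1))) satisfies system (1) with modulus ((β + ε)/(β − ε))². -/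
/-! Write `s, c, d` for `S, C, D` at `w = z / (β - ε)`. Modulo `s² + c² = 1`, `d² + k s² = 1`,
`β² = 1 - k` and `ε² = 1` one has `((β - ε) s c)² + ((εβ - 1) s² + 1)² = d²`, which is the first
relation, and `1 - (d² + 1) s² = ((εβ - 1) s² + 1)((-εβ - 1) s² + 1)`. By the latter the new `dn`
equals `((-εβ - 1) s² + 1) / d` on `U`, so the second relation is the first one with `ε` replaced
by `-ε`. Finally `(s c / d)' = (1 - (d² + 1) s²) / d²`, the product of the new `cn` and `dn`. -/

section LandenIdentities

variable {R : Type*} [CommRing R] {k β ε s c d : R}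

theorem landen_sq_add_sq (hsc : s ^ 2 + c ^ 2 = 1) (hds : d ^ 2 + k * s ^ 2 = 1)
    (hβ : β ^ 2 = 1 - k) (hε : ε ^ 2 = 1) :
    ((β - ε) * s * c) ^ 2 + ((ε * β - 1) * s ^ 2 + 1) ^ 2 = d ^ 2 := by
  linear_combination
    (β - ε) ^ 2 * s ^ 2 * hsc - hds + s ^ 2 * hβ + s ^ 2 * (s ^ 2 * β ^ 2 + 1 - s ^ 2) * hε

theorem landen_factor (hds : d ^ 2 + k * s ^ 2 = 1) (hβ : β ^ 2 = 1 - k) (hε : ε ^ 2 = 1) :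
    1 - (d ^ 2 + 1) * s ^ 2 = ((ε * β - 1) * s ^ 2 + 1) * ((-ε * β - 1) * s ^ 2 + 1) := by
  linear_combination (-s ^ 2) * hds + s ^ 4 * hβ + s ^ 4 * β ^ 2 * hε

end LandenIdentities

namespace IsJacobiTriple

variable {k : ℂ} {S C D : ℂ → ℂ}

theorem differentiable_sn (hJ : IsJacobiTriple k S C D) : Differentiable ℂ S :=
  fun z => (hJ z).1.differentiableAt

theorem differentiable_dn (hJ : IsJacobiTriple k S C D) : Differentiable ℂ D :=
  fun z => (hJ z).2.2.1.differentiableAt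

theorem hasDerivAt_sn_mul_cn_div_dn (hJ : IsJacobiTriple k S C D) {w : ℂ} (hD : D w ≠ 0) :
    HasDerivAt (fun w => S w * C w / D w) ((1 - (D w ^ 2 + 1) * S w ^ 2) / D w ^ 2) w := by
  obtain ⟨hS', hC', hD', hsc, hds⟩ := hJ w
  refine ((hS'.mul hC').div hD' hD).congr_deriv ?_
  simp only [Pi.mul_apply]
  field_simp
  linear_combination (D w ^ 2 + k * S w ^ 2) * hsc + (1 - S w ^ 2) * hds

end IsJacobiTriple

theorem stmt_8 (k : ℂ) (S C D : ℂ → ℂ) (hJ : IsJacobiTriple k S C D)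
    (ε : ℂ) (hε : ε = 1 ∨ ε = -1)
    (β : ℂ) (hβ : β ^ 2 = 1 - k) (hl : β - ε ≠ 0) :
    SatisfiesSystem1 (((β + ε) / (β - ε)) ^ 2)
      (fun z => (β - ε) * S (z / (β - ε)) * C (z / (β - ε)) / D (z / (β - ε)))
      (fun z => ((ε * β - 1) * S (z / (β - ε)) ^ 2 + 1) / D (z / (β - ε)))
      (fun z => (1 - (D (z / (β - ε)) ^ 2 + 1) * S (z / (β - ε)) ^ 2) /
        (D (z / (β - ε)) * ((ε * β - 1) * S (z / (β - ε)) ^ 2 + 1)))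
      {z : ℂ | D (z / (β - ε)) ≠ 0 ∧ (ε * β - 1) * S (z / (β - ε)) ^ 2 + 1 ≠ 0} := by
  rintro z ⟨hd, ha⟩
  have hε2 : ε ^ 2 = 1 := by rcases hε with rfl | rfl <;> norm_num
  obtain ⟨-, -, -, hsc, hds⟩ := hJ (z / (β - ε))
  have hS := hJ.differentiable_sn
  have hD := hJ.differentiable_dn
  have hda := mul_ne_zero hd ha
  have hDt : (1 - (D (z / (β - ε)) ^ 2 + 1) * S (z / (β - ε)) ^ 2) /
      (D (z / (β - ε)) * ((ε * β - 1) * S (z / (β - ε)) ^ 2 + 1)) =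
      ((-ε * β - 1) * S (z / (β - ε)) ^ 2 + 1) / D (z / (β - ε)) := by
    rw [landen_factor hds hβ hε2, mul_comm (D _), mul_div_mul_left _ _ ha]
  refine ⟨?_, by fun_prop (disch := assumption), by fun_prop (disch := assumption), ?_, ?_⟩
  · have hw : HasDerivAt (fun z => z / (β - ε)) (1 / (β - ε)) z := (hasDerivAt_id' z).div_const _
    refine ((((hJ.hasDerivAt_sn_mul_cn_div_dn hd).comp z hw).const_mul (β - ε)).congr_deriv ?_
      ).congr_of_eventuallyEq (.of_forall fun y => ?_)
    · simp only [hDt]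
      rw [landen_factor hds hβ hε2]
      field_simp
    · simp only [Function.comp]; ring
  · field_simp
    linear_combination landen_sq_add_sq hsc hds hβ hε2
  · simp only [hDt]
    field_simp
    linear_combination landen_sq_add_sq (ε := -ε) hsc hds hβ (by rw [neg_sq, hε2])
end
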